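/- Define two optimization problems over R_t, Ω_l ∈ SO(3) (t = 1,…,T, l = 1,…,T−1) and ℝ³-valued variables: Problem A, with variables p_t, v_l, objective F_A = Σ_{t,i} w_t^i ‖y_t^i − R_t B_i c_A − p_t‖² + λ‖c_A − c̄‖² + Σ_{l} ω_l‖v_{l+1}−v_l‖² + κ_l‖Ω_{l+1}−Ω_l‖²_F and constraints p_{t+1} = p_t + R_t v_t, R_{t+1} = R_t Ω_t, where c_A = 2G(BᵀΣ_t W_t h_t + λc̄) + g with h_t stacking R_tᵀ(y_t^i − p_t); and Problem B, with variables s_t, v_l, objective F_B = Σ_{t,i} w_t^i ‖R_tᵀ y_t^i − B_i c_B − s_t‖² + λ‖c_B − c̄‖² + Σ_l ω_l‖v_{l+1}−v_l‖² + κ_l‖Ω_{l+1}−Ω_l‖²_F and constraints Ω_t s_{t+1} = s_t + v_t, R_{t+1} = R_t Ω_t, where c_B = 2G(BᵀΣ_t W_t h'_t + λc̄) + g with h'_t stacking R_tᵀ y_t^i − s_t. Then the map (R, Ω, p, v) ↦ (R, Ω, s, v) with s_t = R_tᵀ p_t is a bijection between the feasible sets of Problem A and Problem B that satisfies F_A(R,Ω,p,v)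 = F_B(R,Ω,s,v); in particular the two problems have equal infima. -/
import Mathlib


open Matrix

/-- SO(3): real 3×3 matrices with `RᵀR = I` and `det R = 1`. -/
def SO3 : Set (Matrix (Fin 3) (Fin 3) ℝ) := {R | Rᵀ * R = 1 ∧ R.det = 1}

/-- Squared Euclidean norm of a real vector. -/
def sqnorm {n : Type*} [Fintype n] (v : n → ℝ) : ℝ := ∑ a, (v a) ^ 2

/-- Squared Frobenius norm of a real matrix. -/
def frobSq {n m : Type*} [Fintype n] [Fintype m] (M : Matrix n m ℝ) : ℝ :=
  ∑ i, ∑ j, (M i j) ^ 2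

/-- A decision-variable tuple `(R, Ω, p-or-s, v)`: rotations and positions indexed by
`t = 1,…,T`, rotation rates and velocities indexed by `l = 1,…,T−1`. -/
abbrev Tup (T : ℕ) := (Fin T → Matrix (Fin 3) (Fin 3) ℝ) ×
  (Fin (T - 1) → Matrix (Fin 3) (Fin 3) ℝ) ×
  (Fin T → Fin 3 → ℝ) × (Fin (T - 1) → Fin 3 → ℝ)

/-- Inclusion `Fin (T-1) → Fin T`, `l ↦ l` (time `t = l`). -/
def idxLo {T : ℕ} (l : Fin (T - 1)) : Fin T := ⟨l.1, by have := l.isLt; omega⟩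

/-- Inclusion `Fin (T-1) → Fin T`, `l ↦ l+1` (time `t = l+1`). -/
def idxHi {T : ℕ} (l : Fin (T - 1)) : Fin T := ⟨l.1 + 1, by have := l.isLt; omega⟩

/-- Feasible set of Problem A: all rotations in SO(3), world-frame dynamics
`p_{t+1} = p_t + R_t v_t` and `R_{t+1} = R_t Ω_t`. -/
def feasA {T : ℕ} : Set (Tup T) :=
  {z | (∀ t, z.1 t ∈ SO3) ∧ (∀ l, z.2.1 l ∈ SO3) ∧
    ∀ l : Fin (T - 1),
      z.2.2.1 (idxHi l) = z.2.2.1 (idxLo l) + (z.1 (idxLo l)).mulVec (z.2.2.2 l) ∧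
      z.1 (idxHi l) = z.1 (idxLo l) * z.2.1 l}

/-- Feasible set of Problem B: all rotations in SO(3), body-frame dynamics
`Ω_t s_{t+1} = s_t + v_t` and `R_{t+1} = R_t Ω_t`. -/
def feasB {T : ℕ} : Set (Tup T) :=
  {z | (∀ t, z.1 t ∈ SO3) ∧ (∀ l, z.2.1 l ∈ SO3) ∧
    ∀ l : Fin (T - 1),
      (z.2.1 l).mulVec (z.2.2.1 (idxHi l)) = z.2.2.1 (idxLo l) + z.2.2.2 l ∧
      z.1 (idxHi l) = z.1 (idxLo l) * z.2.1 l}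

/-- Closed-form optimal shape coefficient of Problem A:
`c_A = 2G(Bᵀ Σ_t W_t h_t + λ c̄) + g`, `h_t` stacking `R_tᵀ(y_t^i − p_t)`. -/
def cA {T N K : ℕ} (y : Fin T → Fin N → Fin 3 → ℝ)
    (B : Matrix (Fin N × Fin 3) (Fin K) ℝ)
    (W : Fin T → Matrix (Fin N × Fin 3) (Fin N × Fin 3) ℝ)
    (G : Matrix (Fin K) (Fin K) ℝ) (g cbar : Fin K → ℝ) (lam : ℝ)
    (R : Fin T → Matrix (Fin 3) (Fin 3) ℝ) (p : Fin T → Fin 3 → ℝ) : Fin K → ℝ :=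
  (2 : ℝ) • G.mulVec
    (Bᵀ.mulVec (∑ t, (W t).mulVec fun q => ((R t)ᵀ.mulVec (y t q.1 - p t)) q.2)
      + lam • cbar) + g

/-- Closed-form optimal shape coefficient of Problem B:
`c_B = 2G(Bᵀ Σ_t W_t h'_t + λ c̄) + g`, `h'_t` stacking `R_tᵀ y_t^i − s_t`. -/
def cB {T N K : ℕ} (y : Fin T → Fin N → Fin 3 → ℝ)
    (B : Matrix (Fin N × Fin 3) (Fin K) ℝ)
    (W : Fin T → Matrix (Fin N × Fin 3) (Fin N × Fin 3) ℝ)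
    (G : Matrix (Fin K) (Fin K) ℝ) (g cbar : Fin K → ℝ) (lam : ℝ)
    (R : Fin T → Matrix (Fin 3) (Fin 3) ℝ) (s : Fin T → Fin 3 → ℝ) : Fin K → ℝ :=
  (2 : ℝ) • G.mulVec
    (Bᵀ.mulVec (∑ t, (W t).mulVec fun q => ((R t)ᵀ.mulVec (y t q.1)) q.2 - s t q.2)
      + lam • cbar) + g

/-- Motion-smoothing part of both objectives:
`Σ_l ω_l ‖v_{l+1} − v_l‖² + κ_l ‖Ω_{l+1} − Ω_l‖²_F`. -/
def smoothObj {T : ℕ} (ω κ : Fin (T - 1) → ℝ) (z : Tup T) : ℝ :=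
  ∑ l : Fin (T - 1), (if h : l.1 + 1 < T - 1 then
    ω l * sqnorm (z.2.2.2 ⟨l.1 + 1, h⟩ - z.2.2.2 l)
      + κ l * frobSq (z.2.1 ⟨l.1 + 1, h⟩ - z.2.1 l)
  else 0)

/-- Objective of Problem A. -/
def FA {T N K : ℕ} (y : Fin T → Fin N → Fin 3 → ℝ)
    (Bmat : Fin N → Matrix (Fin 3) (Fin K) ℝ)
    (B : Matrix (Fin N × Fin 3) (Fin K) ℝ)
    (W : Fin T → Matrix (Fin N × Fin 3) (Fin N × Fin 3) ℝ)
    (G : Matrix (Fin K) (Fin K) ℝ) (g cbar : Fin K → ℝ)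
    (w : Fin T → Fin N → ℝ) (lam : ℝ) (ω κ : Fin (T - 1) → ℝ) (z : Tup T) : ℝ :=
  (∑ t, ∑ i, w t i * sqnorm (y t i -
      (z.1 t).mulVec ((Bmat i).mulVec (cA y B W G g cbar lam z.1 z.2.2.1)) - z.2.2.1 t))
    + lam * sqnorm (cA y B W G g cbar lam z.1 z.2.2.1 - cbar)
    + smoothObj ω κ z

/-- Objective of Problem B. -/
def FB {T N K : ℕ} (y : Fin T → Fin N → Fin 3 → ℝ)
    (Bmat : Fin N → Matrix (Fin 3) (Fin K) ℝ)
    (B : Matrix (Fin N × Fin 3) (Fin K) ℝ)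
    (W : Fin T → Matrix (Fin N × Fin 3) (Fin N × Fin 3) ℝ)
    (G : Matrix (Fin K) (Fin K) ℝ) (g cbar : Fin K → ℝ)
    (w : Fin T → Fin N → ℝ) (lam : ℝ) (ω κ : Fin (T - 1) → ℝ) (z : Tup T) : ℝ :=
  (∑ t, ∑ i, w t i * sqnorm ((z.1 t)ᵀ.mulVec (y t i) -
      (Bmat i).mulVec (cB y B W G g cbar lam z.1 z.2.2.1) - z.2.2.1 t))
    + lam * sqnorm (cB y B W G g cbar lam z.1 z.2.2.1 - cbar)
    + smoothObj ω κ z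

/-- The change of variables `(R, Ω, p, v) ↦ (R, Ω, s, v)` with `s_t = R_tᵀ p_t`. -/
def chgVar {T : ℕ} (z : Tup T) : Tup T :=
  (z.1, z.2.1, fun t => (z.1 t)ᵀ.mulVec (z.2.2.1 t), z.2.2.2)


section Aux

lemma orth_cancel {R : Matrix (Fin 3) (Fin 3) ℝ} (h : Rᵀ * R = 1) (v : Fin 3 → ℝ) :
    Rᵀ.mulVec (R.mulVec v) = v := by
  rw [mulVec_mulVec, h, one_mulVec]

lemma orth_cancel' {R : Matrix (Fin 3) (Fin 3) ℝ} (h : Rᵀ * R = 1) (v : Fin 3 → ℝ) :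
    R.mulVec (Rᵀ.mulVec v) = v := by
  rw [mulVec_mulVec, mul_eq_one_comm.mp h, one_mulVec]

lemma sqnorm_eq (v : Fin 3 → ℝ) : sqnorm v = v ⬝ᵥ v := by
  simp [sqnorm, dotProduct, sq]

lemma sqnorm_orth {R : Matrix (Fin 3) (Fin 3) ℝ} (h : Rᵀ * R = 1) (v : Fin 3 → ℝ) :
    sqnorm (Rᵀ.mulVec v) = sqnorm v := by
  rw [sqnorm_eq, sqnorm_eq, dotProduct_mulVec, vecMul_transpose, mulVec_mulVec,
    mul_eq_one_comm.mp h, one_mulVec]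

/-- Inverse change of variables. -/
def invVar {T : ℕ} (z : Tup T) : Tup T :=
  (z.1, z.2.1, fun t => (z.1 t).mulVec (z.2.2.1 t), z.2.2.2)

lemma cA_eq_cB {T N K : ℕ} (y : Fin T → Fin N → Fin 3 → ℝ)
    (B : Matrix (Fin N × Fin 3) (Fin K) ℝ)
    (W : Fin T → Matrix (Fin N × Fin 3) (Fin N × Fin 3) ℝ)
    (G : Matrix (Fin K) (Fin K) ℝ) (g cbar : Fin K → ℝ) (lam : ℝ)
    (R : Fin T → Matrix (Fin 3) (Fin 3) ℝ) (p : Fin T → Fin 3 → ℝ) :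
    cA y B W G g cbar lam R p
      = cB y B W G g cbar lam R (fun t => (R t)ᵀ.mulVec (p t)) := by
  unfold cA cB
  simp only [mulVec_sub, Pi.sub_apply]

lemma mapsAB {T : ℕ} : Set.MapsTo (chgVar (T := T)) feasA feasB := by
  rintro ⟨R, Om, p, v⟩ ⟨hR, hOm, hcon⟩
  refine ⟨hR, hOm, fun l => ?_⟩
  obtain ⟨h1, h2⟩ := hcon l
  have h1' : p (idxHi l) = p (idxLo l) + (R (idxLo l)).mulVec (v l) := h1
  have h2' : R (idxHi l) = R (idxLo l) * Om l := h2
  refine ⟨?_, h2⟩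
  show (Om l).mulVec ((R (idxHi l))ᵀ.mulVec (p (idxHi l)))
      = (R (idxLo l))ᵀ.mulVec (p (idxLo l)) + v l
  rw [h2', h1', transpose_mul, ← mulVec_mulVec, orth_cancel' (hOm l).1, mulVec_add,
    orth_cancel (hR (idxLo l)).1]

lemma mapsBA {T : ℕ} : Set.MapsTo (invVar (T := T)) feasB feasA := by
  rintro ⟨R, Om, s, v⟩ ⟨hR, hOm, hcon⟩
  refine ⟨hR, hOm, fun l => ?_⟩
  obtain ⟨h1, h2⟩ := hcon l
  have h1' : (Om l).mulVec (s (idxHi l)) = s (idxLo l) + v l := h1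
  have h2' : R (idxHi l) = R (idxLo l) * Om l := h2
  refine ⟨?_, h2⟩
  show (R (idxHi l)).mulVec (s (idxHi l))
      = (R (idxLo l)).mulVec (s (idxLo l)) + (R (idxLo l)).mulVec (v l)
  rw [h2', ← mulVec_mulVec, h1', mulVec_add]

lemma invOnAB {T : ℕ} : Set.InvOn (invVar (T := T)) chgVar feasA feasB := by
  constructor
  · rintro ⟨R, Om, p, v⟩ ⟨hR, -, -⟩
    have hs : (fun t => (R t).mulVec ((R t)ᵀ.mulVec (p t))) = p :=
      funext fun t => orth_cancel' (hR t).1 (p t)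
    show (R, Om, fun t => (R t).mulVec ((R t)ᵀ.mulVec (p t)), v) = (R, Om, p, v)
    rw [hs]
  · rintro ⟨R, Om, s, v⟩ ⟨hR, -, -⟩
    have hs : (fun t => (R t)ᵀ.mulVec ((R t).mulVec (s t))) = s :=
      funext fun t => orth_cancel (hR t).1 (s t)
    show (R, Om, fun t => (R t)ᵀ.mulVec ((R t).mulVec (s t)), v) = (R, Om, s, v)
    rw [hs]

lemma FA_eq_FB {T N K : ℕ} (y : Fin T → Fin N → Fin 3 → ℝ)
    (Bmat : Fin N → Matrix (Fin 3) (Fin K) ℝ)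
    (B : Matrix (Fin N × Fin 3) (Fin K) ℝ)
    (W : Fin T → Matrix (Fin N × Fin 3) (Fin N × Fin 3) ℝ)
    (G : Matrix (Fin K) (Fin K) ℝ) (g cbar : Fin K → ℝ)
    (w : Fin T → Fin N → ℝ) (lam : ℝ) (ω κ : Fin (T - 1) → ℝ)
    (z : Tup T) (hz : z ∈ feasA) :
    FA y Bmat B W G g cbar w lam ω κ z = FB y Bmat B W G g cbar w lam ω κ (chgVar z) := by
  obtain ⟨R, Om, p, v⟩ := z
  obtain ⟨hR, -, -⟩ := hz
  unfold FA FB chgVar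
  have hc : cA y B W G g cbar lam R p
      = cB y B W G g cbar lam R (fun t => (R t)ᵀ.mulVec (p t)) := cA_eq_cB ..
  simp only [hc]
  congr 1
  congr 1
  refine Finset.sum_congr rfl fun t _ => Finset.sum_congr rfl fun i _ => ?_
  congr 1
  rw [← sqnorm_orth (hR t).1]
  congr 1
  rw [mulVec_sub, mulVec_sub, orth_cancel (hR t).1]

end Aux

/-- The map `(R,Ω,p,v) ↦ (R,Ω,s,v)` with `s_t = R_tᵀ p_t` is a bijection
between the feasible sets of Problem A and Problem B satisfying
`F_A(R,Ω,p,v) = F_B(R,Ω,s,v)`; in particular the two problems have equal infima. -/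
theorem stmt_4 (T N K : ℕ) (hK : 0 < K)
    (y : Fin T → Fin N → Fin 3 → ℝ)
    (Bmat : Fin N → Matrix (Fin 3) (Fin K) ℝ)
    (w : Fin T → Fin N → ℝ) (hw : ∀ t i, 0 < w t i)
    (lam : ℝ) (hlam : 0 < lam)
    (ω κ : Fin (T - 1) → ℝ) (hω : ∀ l, 0 ≤ ω l) (hκ : ∀ l, 0 ≤ κ l)
    (cbar : Fin K → ℝ) (hcbar : cbar = fun _ => (1 : ℝ) / K)
    (B : Matrix (Fin N × Fin 3) (Fin K) ℝ) (hB : B = fun q k => Bmat q.1 q.2 k)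
    (W : Fin T → Matrix (Fin N × Fin 3) (Fin N × Fin 3) ℝ)
    (hW : W = fun t => Matrix.diagonal fun q => w t q.1)
    (H : Matrix (Fin K) (Fin K) ℝ)
    (hH : H = (2 : ℝ)⁻¹ • (Bᵀ * (∑ t, W t) * B + lam • (1 : Matrix (Fin K) (Fin K) ℝ))⁻¹)
    (ones : Fin K → ℝ) (hones : ones = fun _ => 1)
    (G : Matrix (Fin K) (Fin K) ℝ)
    (hG : G = H - (1 / (ones ⬝ᵥ H.mulVec ones)) •
      vecMulVec (H.mulVec ones) (vecMul ones H))
    (g : Fin K → ℝ) (hg : g = (1 / (ones ⬝ᵥ H.mulVec ones)) • H.mulVec ones) :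
    Set.BijOn (chgVar (T := T)) feasA feasB ∧
      (∀ z ∈ feasA (T := T),
        FA y Bmat B W G g cbar w lam ω κ z = FB y Bmat B W G g cbar w lam ω κ (chgVar z)) ∧
      sInf (FA y Bmat B W G g cbar w lam ω κ '' feasA) =
        sInf (FB y Bmat B W G g cbar w lam ω κ '' feasB) := by
  have hbij : Set.BijOn (chgVar (T := T)) feasA feasB :=
    Set.InvOn.bijOn invOnAB mapsAB mapsBA
  have heq : ∀ z ∈ feasA (T := T),
      FA y Bmat B W G g cbar w lam ω κ z = FB y Bmat B W G g cbar w lam ω κ (chgVar z) :=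
    fun z hz => FA_eq_FB y Bmat B W G g cbar w lam ω κ z hz
  refine ⟨hbij, heq, ?_⟩
  have himg : FB y Bmat B W G g cbar w lam ω κ '' feasB
      = FA y Bmat B W G g cbar w lam ω κ '' feasA := by
    rw [← hbij.image_eq, ← Set.image_comp]
    exact Set.image_congr fun z hz => (heq z hz).symm
  rw [himg]
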